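/- arXiv:1611.08681 — 4 statements merged into one kernel-verified Lean document; each statement's English description precedes it below -/
import Mathlib

section
/- Adding a row that is a convex combination of the existing rows does not change the value of a zero-sum matrix game: if O' : Fin (m+1) → Fin n → ℝ agrees with O on the first m rows and its last row satisfies O' (Fin.last m) j = Σ_{i ∈ Fin m} λ i * O i j for all j, where λ ∈ stdSimplex ℝ (Fin m), then val O' = val O. -/
/-- The column player's guaranteed (minimal) payoff against mixed row strategy `p`. -/
noncomputable def minPay {m n : ℕ} (O : Fin m → Fin n → ℝ) (p : Fin m → ℝ) : ℝ :=
  ⨅ j : Fin n, ∑ i, p i * O i j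

/-- The (lower) value of the zero-sum matrix game with payoff matrix `O`. -/
noncomputable def gameVal {m n : ℕ} (O : Fin m → Fin n → ℝ) : ℝ :=
  ⨆ p : {p : Fin m → ℝ // p ∈ stdSimplex ℝ (Fin m)}, minPay O p.1

/-- The value of the game when the row player is restricted to rows in `S`. -/
noncomputable def gameValOn {m n : ℕ} (O : Fin m → Fin n → ℝ) (S : Finset (Fin m)) : ℝ :=
  ⨆ p : {p : Fin m → ℝ // p ∈ stdSimplex ℝ (Fin m) ∧ ∀ i ∉ S, p i = 0}, minPay O p.1

/-! Every strategy in the enlarged game is matched by one in the original game with the same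
guaranteed payoff, and conversely: a strategy of `O` is padded with weight `0` on the new row,
and a strategy of `O'` redistributes the weight of the new row according to `lam`. Hence both
games have the same set of guaranteed payoffs, and so the same value. -/

theorem gameVal_eq_of_minPay_matching {m m' n : ℕ} {O : Fin m → Fin n → ℝ}
    {O' : Fin m' → Fin n → ℝ}
    (h₁ : ∀ q ∈ stdSimplex ℝ (Fin m'), ∃ p ∈ stdSimplex ℝ (Fin m), minPay O p = minPay O' q)
    (h₂ : ∀ p ∈ stdSimplex ℝ (Fin m), ∃ q ∈ stdSimplex ℝ (Fin m'), minPay O' q = minPay O p) :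
    gameVal O' = gameVal O := by
  suffices Set.range (fun q : {q // q ∈ stdSimplex ℝ (Fin m')} => minPay O' q.1) =
      Set.range (fun p : {p // p ∈ stdSimplex ℝ (Fin m)} => minPay O p.1) by
    rw [gameVal, gameVal, iSup, iSup, this]
  ext x
  constructor
  · rintro ⟨⟨q, hq⟩, rfl⟩
    obtain ⟨p, hp, h⟩ := h₁ q hq
    exact ⟨⟨p, hp⟩, h⟩
  · rintro ⟨⟨p, hp⟩, rfl⟩
    obtain ⟨q, hq, h⟩ := h₂ p hp
    exact ⟨⟨q, hq⟩, h⟩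

section AddRow

variable {m n : ℕ} {O : Fin m → Fin n → ℝ} {O' : Fin (m + 1) → Fin n → ℝ}

theorem snoc_zero_mem_stdSimplex {p : Fin m → ℝ} (hp : p ∈ stdSimplex ℝ (Fin m)) :
    (Fin.snoc p 0 : Fin (m + 1) → ℝ) ∈ stdSimplex ℝ (Fin (m + 1)) := by
  refine ⟨fun i => ?_, ?_⟩
  · induction i using Fin.lastCases with
    | last => simp
    | cast i => simpa using hp.1 i
  · simpa [Fin.sum_univ_castSucc] using hp.2

theorem minPay_snoc_zero (hrows : ∀ i : Fin m, O' i.castSucc = O i) (p : Fin m → ℝ) :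
    minPay O' (Fin.snoc p 0) = minPay O p := by
  refine iInf_congr fun j => ?_
  simp [Fin.sum_univ_castSucc, hrows]

def mergeLast (lam : Fin m → ℝ) (q : Fin (m + 1) → ℝ) : Fin m → ℝ :=
  fun i => q i.castSucc + q (Fin.last m) * lam i

theorem mergeLast_mem_stdSimplex {lam : Fin m → ℝ} (hlam : lam ∈ stdSimplex ℝ (Fin m))
    {q : Fin (m + 1) → ℝ} (hq : q ∈ stdSimplex ℝ (Fin (m + 1))) :
    mergeLast lam q ∈ stdSimplex ℝ (Fin m) := by
  refine ⟨fun i => add_nonneg (hq.1 _) (mul_nonneg (hq.1 _) (hlam.1 i)), ?_⟩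
  simp only [mergeLast, Finset.sum_add_distrib, ← Finset.mul_sum, hlam.2, mul_one]
  rw [← Fin.sum_univ_castSucc q, hq.2]

theorem minPay_mergeLast {lam : Fin m → ℝ} (hrows : ∀ i : Fin m, O' i.castSucc = O i)
    (hlast : ∀ j : Fin n, O' (Fin.last m) j = ∑ i, lam i * O i j) (q : Fin (m + 1) → ℝ) :
    minPay O (mergeLast lam q) = minPay O' q := by
  refine iInf_congr fun j => ?_
  simp only [mergeLast, Fin.sum_univ_castSucc, hrows, hlast, add_mul, Finset.sum_add_distrib,
    Finset.mul_sum, mul_assoc]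

end AddRow

theorem gameVal_add_convex_row_general {m n : ℕ}
    (O : Fin m → Fin n → ℝ) (lam : Fin m → ℝ) (hlam : lam ∈ stdSimplex ℝ (Fin m))
    (O' : Fin (m + 1) → Fin n → ℝ)
    (hrows : ∀ i : Fin m, O' i.castSucc = O i)
    (hlast : ∀ j : Fin n, O' (Fin.last m) j = ∑ i, lam i * O i j) :
    gameVal O' = gameVal O :=
  gameVal_eq_of_minPay_matching
    (fun q hq => ⟨mergeLast lam q, mergeLast_mem_stdSimplex hlam hq,
      minPay_mergeLast hrows hlast q⟩)
    (fun p hp => ⟨Fin.snoc p 0, snoc_zero_mem_stdSimplex hp, minPay_snoc_zero hrows p⟩)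

/-- Adding a row that is a convex combination of the existing rows does not
change the value of the zero-sum matrix game. -/
theorem gameVal_add_convex_row {m n : ℕ} (hm : 1 ≤ m) (hn : 1 ≤ n)
    (O : Fin m → Fin n → ℝ) (lam : Fin m → ℝ) (hlam : lam ∈ stdSimplex ℝ (Fin m))
    (O' : Fin (m + 1) → Fin n → ℝ)
    (hrows : ∀ i : Fin m, O' i.castSucc = O i)
    (hlast : ∀ j : Fin n, O' (Fin.last m) j = ∑ i, lam i * O i j) :
    gameVal O' = gameVal O :=
  gameVal_add_convex_row_general O lam hlam O' hrows hlast
end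

section
/- A row that is weakly dominated by a convex combination of the other rows can be removed without changing the value: if i₀ ∈ Fin m, m ≥ 2, and there exists λ ∈ stdSimplex ℝ (Fin m) with λ i₀ = 0 such that O i₀ j ≤ Σ_i λ i * O i j for every column j, then the value of the game restricted to the rows Fin m \ {i₀} equals val O. -/
/-!
Given a mixed strategy `p`, move the weight `p i₀` of the dominated row onto the rows it is
dominated by, in the proportions `lam`. The new strategy avoids `i₀` and, column by column,
pays at least as much as `p`, so restricting to the other rows loses nothing.
-/

section Redistribute

variable {ι : Type*} [DecidableEq ι]

def redistribute (p lam : ι → ℝ) (i₀ : ι) : ι → ℝ :=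
  p + p i₀ • (lam - Pi.single i₀ 1)

theorem redistribute_apply_self {p lam : ι → ℝ} {i₀ : ι} (hlam₀ : lam i₀ = 0) :
    redistribute p lam i₀ i₀ = 0 := by
  simp [redistribute, hlam₀]

variable [Fintype ι]

theorem sum_redistribute_mul (p lam : ι → ℝ) (i₀ : ι) (f : ι → ℝ) :
    ∑ i, redistribute p lam i₀ i * f i =
      ∑ i, p i * f i + p i₀ * (∑ i, lam i * f i - f i₀) := by
  simp only [redistribute, Pi.add_apply, Pi.smul_apply, Pi.sub_apply, smul_eq_mul, add_mul,
    sub_mul, mul_assoc, Finset.sum_add_distrib, ← Finset.mul_sum, Finset.sum_sub_distrib,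
    Pi.single_apply, ite_mul, one_mul, zero_mul, Finset.sum_ite_eq', Finset.mem_univ, if_true]

theorem redistribute_mem_stdSimplex {p lam : ι → ℝ} {i₀ : ι} (hp : p ∈ stdSimplex ℝ ι)
    (hlam : lam ∈ stdSimplex ℝ ι) (hlam₀ : lam i₀ = 0) :
    redistribute p lam i₀ ∈ stdSimplex ℝ ι := by
  refine ⟨fun i => ?_, ?_⟩
  · rcases eq_or_ne i i₀ with rfl | hi
    · exact (redistribute_apply_self hlam₀).ge
    · simp only [redistribute, Pi.add_apply, Pi.smul_apply, Pi.sub_apply, smul_eq_mul,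
        Pi.single_eq_of_ne hi, sub_zero]
      exact add_nonneg (hp.1 i) (mul_nonneg (hp.1 i₀) (hlam.1 i))
  · simpa [hp.2, hlam.2] using sum_redistribute_mul p lam i₀ 1

end Redistribute

section MinPay

variable {m n : ℕ} (O : Fin m → Fin n → ℝ)

theorem minPay_mono {p q : Fin m → ℝ} (h : ∀ j, ∑ i, p i * O i j ≤ ∑ i, q i * O i j) :
    minPay O p ≤ minPay O q :=
  ciInf_mono (Finite.bddBelow_range _) h

theorem bddAbove_minPay_image_stdSimplex : BddAbove (minPay O '' stdSimplex ℝ (Fin m)) := by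
  refine ⟨⨅ j, ∑ i, |O i j|, ?_⟩
  rintro _ ⟨p, hp, rfl⟩
  refine ciInf_mono (Finite.bddBelow_range _) fun j => Finset.sum_le_sum fun i _ => ?_
  obtain ⟨hp0, hp1⟩ := mem_Icc_of_mem_stdSimplex hp i
  calc p i * O i j ≤ p i * |O i j| := mul_le_mul_of_nonneg_left (le_abs_self _) hp0
    _ ≤ |O i j| := mul_le_of_le_one_left (abs_nonneg _) hp1

theorem minPay_le_minPay_redistribute {p lam : Fin m → ℝ} {i₀ : Fin m} (hp₀ : 0 ≤ p i₀)
    (hdom : ∀ j, O i₀ j ≤ ∑ i, lam i * O i j) :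
    minPay O p ≤ minPay O (redistribute p lam i₀) :=
  minPay_mono O fun j => by
    rw [sum_redistribute_mul]
    exact le_add_of_nonneg_right (mul_nonneg hp₀ (sub_nonneg.2 (hdom j)))

theorem minPay_le_gameValOn {S : Finset (Fin m)} {p : Fin m → ℝ}
    (hp : p ∈ stdSimplex ℝ (Fin m)) (hpS : ∀ i ∉ S, p i = 0) : minPay O p ≤ gameValOn O S :=
  le_ciSup_of_le ((bddAbove_minPay_image_stdSimplex O).mono (by
    rintro _ ⟨q, rfl⟩; exact ⟨q.1, q.2.1, rfl⟩)) ⟨p, hp, hpS⟩ le_rfl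

theorem minPay_le_gameVal {p : Fin m → ℝ} (hp : p ∈ stdSimplex ℝ (Fin m)) :
    minPay O p ≤ gameVal O :=
  le_ciSup_of_le ((bddAbove_minPay_image_stdSimplex O).mono (by
    rintro _ ⟨q, rfl⟩; exact ⟨q.1, q.2, rfl⟩)) ⟨p, hp⟩ le_rfl

end MinPay

theorem gameVal_erase_dominated_row_general {m n : ℕ}
    (O : Fin m → Fin n → ℝ) (i₀ : Fin m)
    (lam : Fin m → ℝ) (hlam : lam ∈ stdSimplex ℝ (Fin m)) (hlam₀ : lam i₀ = 0)
    (hdom : ∀ j : Fin n, O i₀ j ≤ ∑ i, lam i * O i j) :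
    gameValOn O (Finset.univ.erase i₀) = gameVal O := by
  have avoids_i₀ {q : Fin m → ℝ} (hq : q i₀ = 0) : ∀ i ∉ Finset.univ.erase i₀, q i = 0 := by
    intro i hi
    obtain rfl : i = i₀ := by simpa using hi
    exact hq
  have : Nonempty {p // p ∈ stdSimplex ℝ (Fin m)} := ⟨⟨lam, hlam⟩⟩
  have : Nonempty {p // p ∈ stdSimplex ℝ (Fin m) ∧ ∀ i ∉ Finset.univ.erase i₀, p i = 0} :=
    ⟨⟨lam, hlam, avoids_i₀ hlam₀⟩⟩
  refine le_antisymm (ciSup_le fun p => minPay_le_gameVal O p.2.1) (ciSup_le fun p => ?_)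
  calc minPay O p ≤ minPay O (redistribute p lam i₀) :=
        minPay_le_minPay_redistribute O (p.2.1 i₀) hdom
    _ ≤ gameValOn O (Finset.univ.erase i₀) :=
        minPay_le_gameValOn O (redistribute_mem_stdSimplex p.2 hlam hlam₀)
          (avoids_i₀ (redistribute_apply_self hlam₀))

/-- A row weakly dominated by a convex combination of the other rows can be
removed without changing the value of the game. -/
theorem gameVal_erase_dominated_row {m n : ℕ} (hm : 2 ≤ m) (hn : 1 ≤ n)
    (O : Fin m → Fin n → ℝ) (i₀ : Fin m)
    (lam : Fin m → ℝ) (hlam : lam ∈ stdSimplex ℝ (Fin m)) (hlam₀ : lam i₀ = 0)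
    (hdom : ∀ j : Fin n, O i₀ j ≤ ∑ i, lam i * O i j) :
    gameValOn O (Finset.univ.erase i₀) = gameVal O :=
  gameVal_erase_dominated_row_general O i₀ lam hlam hlam₀ hdom
end

section
/- (Group II reduction) Suppose all entries of O are strictly positive, i₀ ∈ Fin m with m ≥ 2, and there exist nonnegative coefficients λ : Fin m → ℝ with λ i₀ = 0 and Σ_i λ i < 1 such that O i₀ j = Σ_i λ i * O i j for every column j. Then removing row i₀ does not change the value: the value of the game restricted to Fin m \ {i₀} equals val O. -/
open Finset

section MatrixGame

variable {m n : ℕ} (O : Fin m → Fin n → ℝ)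

lemma minPay_le_sum_mul (p : Fin m → ℝ) (j : Fin n) : minPay O p ≤ ∑ i, p i * O i j :=
  ciInf_le (Finite.bddBelow_range _) j

lemma minPay_nonneg (hO : ∀ i j, 0 ≤ O i j) {p : Fin m → ℝ} (hp : ∀ i, 0 ≤ p i) :
    0 ≤ minPay O p :=
  Real.iInf_nonneg fun j => sum_nonneg fun i _ => mul_nonneg (hp i) (hO i j)

lemma minPay_smul {c : ℝ} (hc : 0 ≤ c) (p : Fin m → ℝ) : minPay O (c • p) = c * minPay O p := by
  simp only [minPay, Real.mul_iInf_of_nonneg hc, mul_sum, Pi.smul_apply, smul_eq_mul, mul_assoc]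

lemma minPay_le_of_mem_stdSimplex {p : Fin m → ℝ} (hp : p ∈ stdSimplex ℝ (Fin m)) :
    minPay O p ≤ ∑ i, ∑ j, |O i j| := by
  cases isEmpty_or_nonempty (Fin n) with
  | inl _ =>
    rw [minPay, Real.iInf_of_isEmpty]
    positivity
  | inr hn =>
    obtain ⟨j⟩ := hn
    calc minPay O p ≤ ∑ i, p i * O i j := minPay_le_sum_mul O p j
      _ ≤ ∑ i, |O i j| := sum_le_sum fun i _ =>
        (mul_le_mul_of_nonneg_left (le_abs_self _) (hp.1 i)).trans
          (mul_le_of_le_one_left (abs_nonneg _) (mem_Icc_of_mem_stdSimplex hp i).2)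
      _ ≤ ∑ i, ∑ j, |O i j| := sum_le_sum fun i _ =>
        single_le_sum (fun j _ => abs_nonneg (O i j)) (mem_univ j)

lemma gameVal_nonneg (hO : ∀ i j, 0 ≤ O i j) : 0 ≤ gameVal O :=
  Real.iSup_nonneg fun p => minPay_nonneg O hO p.2.1

lemma gameValOn_nonneg (hO : ∀ i j, 0 ≤ O i j) (S : Finset (Fin m)) : 0 ≤ gameValOn O S :=
  Real.iSup_nonneg fun p => minPay_nonneg O hO p.2.1.1

lemma gameValOn_le_gameVal (hO : ∀ i j, 0 ≤ O i j) (S : Finset (Fin m)) :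
    gameValOn O S ≤ gameVal O :=
  Real.iSup_le
    (fun p => le_ciSup (f := fun p : {p // p ∈ stdSimplex ℝ (Fin m)} => minPay O p.1)
      ⟨_, Set.forall_mem_range.2 fun p => minPay_le_of_mem_stdSimplex O p.2⟩ ⟨p.1, p.2.1⟩)
    (gameVal_nonneg O hO)

lemma minPay_le_gameValOn_s4 (hO : ∀ i j, 0 ≤ O i j) {S : Finset (Fin m)} {q : Fin m → ℝ}
    (hq : ∀ i, 0 ≤ q i) (hq_sum : ∑ i, q i ≤ 1) (hqS : ∀ i ∉ S, q i = 0) :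
    minPay O q ≤ gameValOn O S := by
  set t := ∑ i, q i
  rcases (sum_nonneg fun i _ => hq i : 0 ≤ t).eq_or_lt with ht | ht
  · have hq0 : q = 0 := funext fun i =>
      (sum_eq_zero_iff_of_nonneg fun i _ => hq i).1 ht.symm i (mem_univ i)
    rw [hq0, ← zero_smul ℝ (0 : Fin m → ℝ), minPay_smul O le_rfl, zero_mul]
    exact gameValOn_nonneg O hO S
  have hr : t⁻¹ • q ∈ stdSimplex ℝ (Fin m) ∧ ∀ i ∉ S, (t⁻¹ • q) i = 0 := by
    refine ⟨⟨fun i => smul_nonneg (inv_nonneg.2 ht.le) (hq i), ?_⟩, fun i hi => ?_⟩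
    · simp only [Pi.smul_apply, smul_eq_mul, ← mul_sum, inv_mul_cancel₀ ht.ne', t]
    · simp [hqS i hi]
  have hbdd : BddAbove (Set.range fun r : {r // r ∈ stdSimplex ℝ (Fin m) ∧ ∀ i ∉ S, r i = 0} =>
      minPay O r.1) :=
    ⟨_, Set.forall_mem_range.2 fun r => minPay_le_of_mem_stdSimplex O r.2.1⟩
  calc minPay O q = t * minPay O (t⁻¹ • q) := by
        rw [minPay_smul O (inv_nonneg.2 ht.le), ← mul_assoc, mul_inv_cancel₀ ht.ne', one_mul]
    _ ≤ minPay O (t⁻¹ • q) :=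
        mul_le_of_le_one_left (minPay_nonneg O hO hr.1.1) hq_sum
    _ ≤ gameValOn O S := le_ciSup hbdd ⟨_, hr⟩

lemma minPay_add_smul_sub_single {i₀ : Fin m} {lam : Fin m → ℝ}
    (heq : ∀ j, O i₀ j = ∑ i, lam i * O i j) (p : Fin m → ℝ) (c : ℝ) :
    minPay O (p + c • (lam - Pi.single i₀ 1)) = minPay O p := by
  simp only [minPay, Pi.add_apply, Pi.smul_apply, Pi.sub_apply, smul_eq_mul, add_mul, sub_mul,
    mul_assoc, sum_add_distrib, ← mul_sum, sum_sub_distrib, Pi.single_apply, ite_mul, one_mul,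
    zero_mul, sum_ite_eq', mem_univ, if_true, ← heq, sub_self, mul_zero, add_zero]

lemma minPay_le_gameValOn_erase (hO : ∀ i j, 0 ≤ O i j) {i₀ : Fin m} {lam : Fin m → ℝ}
    (hlam : ∀ i, 0 ≤ lam i) (hlam₀ : lam i₀ = 0) (hlam_sum : ∑ i, lam i ≤ 1)
    (heq : ∀ j, O i₀ j = ∑ i, lam i * O i j) {p : Fin m → ℝ} (hp : p ∈ stdSimplex ℝ (Fin m)) :
    minPay O p ≤ gameValOn O (univ.erase i₀) := by
  set q := p + p i₀ • (lam - Pi.single i₀ 1)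
  have hq_apply : ∀ i, q i = p i + p i₀ * (lam i - (Pi.single i₀ 1 : Fin m → ℝ) i) := fun i => rfl
  have hq₀ : q i₀ = 0 := by simp [hq_apply, hlam₀]
  have hq_nonneg : ∀ i, 0 ≤ q i := by
    intro i
    rcases eq_or_ne i i₀ with rfl | hi
    · exact hq₀.ge
    · simp only [hq_apply, Pi.single_eq_of_ne hi, sub_zero]
      exact add_nonneg (hp.1 i) (mul_nonneg (hp.1 i₀) (hlam i))
  have hq_sum : ∑ i, q i = 1 - p i₀ * (1 - ∑ i, lam i) := by
    simp only [hq_apply, sum_add_distrib, ← mul_sum, sum_sub_distrib, hp.2, sum_pi_single',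
      mem_univ, if_true]
    ring
  rw [← minPay_add_smul_sub_single O heq p (p i₀)]
  refine minPay_le_gameValOn_s4 O hO hq_nonneg ?_ fun i hi => ?_
  · exact hq_sum ▸ sub_le_self _ (mul_nonneg (hp.1 i₀) (sub_nonneg.2 hlam_sum))
  · obtain rfl : i = i₀ := by simpa using hi
    exact hq₀

end MatrixGame

theorem gameVal_erase_subconvex_row_general {m n : ℕ}
    (O : Fin m → Fin n → ℝ) (hpos : ∀ i j, 0 < O i j) (i₀ : Fin m)
    (lam : Fin m → ℝ) (hnonneg : ∀ i, 0 ≤ lam i) (hlam₀ : lam i₀ = 0)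
    (hsum : ∑ i, lam i < 1)
    (heq : ∀ j : Fin n, O i₀ j = ∑ i, lam i * O i j) :
    gameValOn O (Finset.univ.erase i₀) = gameVal O := by
  have hO : ∀ i j, 0 ≤ O i j := fun i j => (hpos i j).le
  exact le_antisymm (gameValOn_le_gameVal O hO _)
    (Real.iSup_le (fun p => minPay_le_gameValOn_erase O hO hnonneg hlam₀ hsum.le heq p.2)
      (gameValOn_nonneg O hO _))

/-- (Group II reduction) If all entries of `O` are strictly positive and row `i₀`
equals a nonnegative combination of the other rows with coefficients summing to
less than one, then removing row `i₀` does not change the value. -/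
theorem gameVal_erase_subconvex_row {m n : ℕ} (hm : 2 ≤ m) (hn : 1 ≤ n)
    (O : Fin m → Fin n → ℝ) (hpos : ∀ i j, 0 < O i j) (i₀ : Fin m)
    (lam : Fin m → ℝ) (hnonneg : ∀ i, 0 ≤ lam i) (hlam₀ : lam i₀ = 0)
    (hsum : ∑ i, lam i < 1)
    (heq : ∀ j : Fin n, O i₀ j = ∑ i, lam i * O i j) :
    gameValOn O (Finset.univ.erase i₀) = gameVal O :=
  gameVal_erase_subconvex_row_general O hpos i₀ lam hnonneg hlam₀ hsum heq
end

section
/- (Proposition 1, subset form) For any payoff matrix O : Fin m → Fin n → ℝ with m ≥ n ≥ 1, there exists a nonempty finite subset S ⊆ Fin m of rows with |S| ≤ n such that the value of the game restricted to S equals the value of the full game: val_S O = val O. In other words, the row player needs at most as many actions as the column player has columns to achieve the value of the game. -/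
/-!
An optimal mixed strategy `q` exists by compactness of the simplex. Its payoff vector
`y = ∑ i, q i • O i` lies in the convex hull of the rows of `O` but not in its interior:
otherwise `y + ε • 1` would be the payoff vector of a strategy doing better against every column.
By Carathéodory, `y` is a combination with positive weights of affinely independent rows; if
there were `n + 1` of them they would form an affine basis of `ℝⁿ`, and `y`, having positive
barycentric coordinates, would be interior. So at most `n` rows carry a strategy with the same
payoff vector as `q`, which is therefore optimal too.
-/

open Finset Filter Topology

theorem convexHull_range_eq_image_stdSimplex {E ι : Type*} [AddCommGroup E] [Module ℝ E]
    [Fintype ι] (v : ι → E) :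
    convexHull ℝ (Set.range v) = (fun p => ∑ i, p i • v i) '' stdSimplex ℝ ι := by
  classical
  change _ = Fintype.linearCombination ℝ v '' _
  rw [← convexHull_basis_eq_stdSimplex, LinearMap.image_convexHull, ← Set.range_comp]
  congr 2
  ext i
  simp [Fintype.linearCombination_apply]

theorem exists_mem_stdSimplex_sum_smul_eq_sum_smul_comp {E ι κ : Type*} [AddCommGroup E]
    [Module ℝ E] [Fintype ι] [DecidableEq ι] [Fintype κ] (v : ι → E) (f : κ → ι) {w : κ → ℝ}
    (hw : w ∈ stdSimplex ℝ κ) :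
    ∃ p ∈ stdSimplex ℝ ι, (∀ i ∉ univ.image f, p i = 0) ∧
      ∑ i, p i • v i = ∑ k, w k • v (f k) := by
  refine ⟨fun i => ∑ k with f k = i, w k, ⟨fun i => sum_nonneg fun k _ => hw.1 k, ?_⟩,
    fun i hi => sum_eq_zero fun k hk => ?_, ?_⟩
  · rw [sum_fiberwise, hw.2]
  · simp_all
  · simp_rw [sum_smul]
    rw [← sum_fiberwise univ f (fun k => w k • v (f k))]
    refine sum_congr rfl fun i _ => sum_congr rfl fun k hk => ?_
    rw [(mem_filter.mp hk).2]

section Geometry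

variable {E : Type*} [NormedAddCommGroup E] [NormedSpace ℝ E]

theorem AffineIndependent.sum_smul_mem_interior_convexHull [FiniteDimensional ℝ E]
    {κ : Type*} [Fintype κ] {z : κ → E} (hz : AffineIndependent ℝ z)
    (hcard : Fintype.card κ = Module.finrank ℝ E + 1) {w : κ → ℝ} (hw₀ : ∀ k, 0 < w k)
    (hw₁ : ∑ k, w k = 1) : ∑ k, w k • z k ∈ interior (convexHull ℝ (Set.range z)) := by
  let b : AffineBasis κ ℝ E := ⟨z, hz, hz.affineSpan_eq_top_iff_card_eq_finrank_add_one.mpr hcard⟩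
  change _ ∈ interior (convexHull ℝ (Set.range b))
  rw [b.interior_convexHull]
  intro k
  rw [← univ.affineCombination_eq_linear_combination _ _ hw₁]
  exact (b.coord_apply_combination_of_mem (mem_univ k) hw₁).symm ▸ hw₀ k

theorem exists_mem_stdSimplex_card_le_finrank_of_notMem_interior_convexHull
    [FiniteDimensional ℝ E] {ι : Type*} [Fintype ι] (v : ι → E) {x : E}
    (hx : x ∈ convexHull ℝ (Set.range v)) (hx' : x ∉ interior (convexHull ℝ (Set.range v))) :
    ∃ S : Finset ι, #S ≤ Module.finrank ℝ E ∧
      ∃ p ∈ stdSimplex ℝ ι, (∀ i ∉ S, p i = 0) ∧ ∑ i, p i • v i = x := by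
  classical
  obtain ⟨κ, _, z, w, hzv, hz, hw₀, hw₁, rfl⟩ := eq_pos_convex_span_of_mem_convexHull hx
  choose f hf using fun k => hzv (Set.mem_range_self k)
  have hcard : Fintype.card κ ≤ Module.finrank ℝ E := by
    refine Nat.le_of_lt_succ (lt_of_le_of_ne ?_ fun hcard => hx' ?_)
    · exact hz.card_le_finrank_succ.trans (Nat.succ_le_succ (Submodule.finrank_le _))
    · exact interior_mono (convexHull_mono hzv) (hz.sum_smul_mem_interior_convexHull hcard hw₀ hw₁)
  obtain ⟨p, hp, hpf, hpv⟩ := exists_mem_stdSimplex_sum_smul_eq_sum_smul_comp v f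
    ⟨fun k => (hw₀ k).le, hw₁⟩
  refine ⟨univ.image f, card_image_le.trans hcard, p, hp, hpf, ?_⟩
  simp only [hpv, hf]

end Geometry

variable {m n : ℕ}

theorem minPay_eq_iInf_sum_smul (O : Fin m → Fin n → ℝ) (p : Fin m → ℝ) :
    minPay O p = ⨅ j, (∑ i, p i • O i) j := by
  simp [minPay, Finset.sum_apply]

theorem minPay_le_sum_smul_apply (O : Fin m → Fin n → ℝ) (p : Fin m → ℝ) (j : Fin n) :
    minPay O p ≤ (∑ i, p i • O i) j := by
  rw [minPay_eq_iInf_sum_smul]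
  exact ciInf_le (Set.finite_range _).bddBelow j

theorem minPay_congr {O : Fin m → Fin n → ℝ} {p q : Fin m → ℝ}
    (h : ∑ i, p i • O i = ∑ i, q i • O i) : minPay O p = minPay O q := by
  rw [minPay_eq_iInf_sum_smul, minPay_eq_iInf_sum_smul, h]

theorem continuous_minPay [Nonempty (Fin n)] (O : Fin m → Fin n → ℝ) :
    Continuous (minPay O) := by
  have h : minPay O = fun p => univ.inf' univ_nonempty (fun j => ∑ i, p i * O i j) :=
    funext fun p => (inf'_univ_eq_ciInf _).symm
  rw [h]
  exact Continuous.finset_inf'_apply univ_nonempty fun j _ => by fun_prop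

theorem exists_isMaxOn_minPay [Nonempty (Fin m)] [Nonempty (Fin n)] (O : Fin m → Fin n → ℝ) :
    ∃ q ∈ stdSimplex ℝ (Fin m), IsMaxOn (minPay O) (stdSimplex ℝ (Fin m)) q :=
  (isCompact_stdSimplex ℝ (Fin m)).exists_isMaxOn
    ⟨_, single_mem_stdSimplex ℝ (Classical.arbitrary _)⟩ (continuous_minPay O).continuousOn

theorem sum_smul_notMem_interior_of_isMaxOn [Nonempty (Fin n)] {O : Fin m → Fin n → ℝ}
    {q : Fin m → ℝ} (hq : IsMaxOn (minPay O) (stdSimplex ℝ (Fin m)) q) :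
    ∑ i, q i • O i ∉ interior (convexHull ℝ (Set.range O)) := by
  set y := ∑ i, q i • O i
  intro hy
  have hshift : Tendsto (fun ε : ℝ => y + ε • (1 : Fin n → ℝ)) (𝓝[>] 0) (𝓝 y) := by
    have : Continuous fun ε : ℝ => y + ε • (1 : Fin n → ℝ) := by fun_prop
    simpa using (this.tendsto 0).mono_left nhdsWithin_le_nhds
  obtain ⟨ε, hεy, hε⟩ :=
    ((hshift.eventually (mem_interior_iff_mem_nhds.mp hy)).and self_mem_nhdsWithin).exists
  obtain ⟨p, hp, hpy : ∑ i, p i • O i = y + ε • 1⟩ :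
      y + ε • 1 ∈ (fun p => ∑ i, p i • O i) '' stdSimplex ℝ (Fin m) :=
    convexHull_range_eq_image_stdSimplex O ▸ hεy
  have hgain : minPay O q + ε ≤ minPay O p := by
    rw [minPay_eq_iInf_sum_smul O p, hpy]
    refine le_ciInf fun j => ?_
    rw [Pi.add_apply, Pi.smul_apply, Pi.one_apply, smul_eq_mul, mul_one]
    exact add_le_add_left (minPay_le_sum_smul_apply O q j) ε
  have hpq : minPay O p ≤ minPay O q := hq hp
  linarith

theorem gameVal_eq_of_isMaxOn {O : Fin m → Fin n → ℝ} {q : Fin m → ℝ}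
    (hq : q ∈ stdSimplex ℝ (Fin m)) (hmax : IsMaxOn (minPay O) (stdSimplex ℝ (Fin m)) q) :
    gameVal O = minPay O q :=
  hmax.iSup_eq hq

theorem gameValOn_eq_of_isMaxOn {O : Fin m → Fin n → ℝ} {S : Finset (Fin m)}
    {q : Fin m → ℝ} (hq : q ∈ stdSimplex ℝ (Fin m)) (hqS : ∀ i ∉ S, q i = 0)
    (hmax : IsMaxOn (minPay O) (stdSimplex ℝ (Fin m)) q) :
    gameValOn O S = minPay O q :=
  (hmax.on_subset fun _ hp => hp.1).iSup_eq
    (s := {p | p ∈ stdSimplex ℝ (Fin m) ∧ ∀ i ∉ S, p i = 0}) ⟨hq, hqS⟩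

/-- (Proposition 1, subset form) The row player needs at most `n` rows to
achieve the value of the game. -/
theorem exists_small_row_subset_achieving_value {m n : ℕ} (hn : 1 ≤ n) (hmn : n ≤ m)
    (O : Fin m → Fin n → ℝ) :
    ∃ S : Finset (Fin m), S.Nonempty ∧ S.card ≤ n ∧ gameValOn O S = gameVal O := by
  have : Nonempty (Fin n) := Fin.pos_iff_nonempty.mp hn
  have : Nonempty (Fin m) := Fin.pos_iff_nonempty.mp (hn.trans hmn)
  obtain ⟨q, hq, hqmax⟩ := exists_isMaxOn_minPay O
  obtain ⟨S, hS, p, hp, hpS, hpq⟩ :=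
    exists_mem_stdSimplex_card_le_finrank_of_notMem_interior_convexHull O
      (convexHull_range_eq_image_stdSimplex O ▸ ⟨q, hq, rfl⟩)
      (sum_smul_notMem_interior_of_isMaxOn hqmax)
  have hpmax : IsMaxOn (minPay O) (stdSimplex ℝ (Fin m)) p :=
    isMaxOn_iff.mpr fun r hr => (minPay_congr hpq).symm ▸ hqmax hr
  refine ⟨S, nonempty_iff_ne_empty.mpr fun hempty => by simpa [hempty, hpS] using hp.2, ?_, ?_⟩
  · simpa using hS
  · rw [gameValOn_eq_of_isMaxOn hp hpS hpmax, gameVal_eq_of_isMaxOn hp hpmax]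
end
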